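/- Let S = (P, L) be a generalized quadrangle of order (2,4) and let (R, ψ) be a faithful representation of S. Then |R| = 2^6. -/

import Mathlib

open scoped Classical

/-- A slim partial linear space: a nonempty point set, a nonempty collection of
lines each of which is a 3-element set of points, such that any two distinct
points lie in at most one common line. -/
structure SlimPLS (P : Type*) where
  lines : Set (Finset P)
  nonempty_pts : Nonempty P
  nonempty_lines : lines.Nonempty
  three_points : ∀ l ∈ lines, l.card = 3
  unique_line : ∀ l₁ ∈ lines, ∀ l₂ ∈ lines, ∀ x y : P,
    x ≠ y → x ∈ l₁ → y ∈ l₁ → x ∈ l₂ → y ∈ l₂ → l₁ = l₂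

namespace SlimPLS

variable {P : Type*}

/-- Two points are collinear if they are distinct and lie on a common line. -/
def Collinear (S : SlimPLS P) (x y : P) : Prop :=
  x ≠ y ∧ ∃ l ∈ S.lines, x ∈ l ∧ y ∈ l

/-- The collinearity graph of a slim partial linear space. -/
def graph (S : SlimPLS P) : SimpleGraph P where
  Adj x y := S.Collinear x y
  symm := ⟨fun x y h => ⟨Ne.symm h.1, h.2.elim fun l hl => ⟨l, hl.1, hl.2.2, hl.2.1⟩⟩⟩
  loopless := ⟨fun x h => h.1 rfl⟩

/-- `S` is a generalized quadrangle of order `(2, t)`: it is connected, no point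
is collinear with all other points, every point is on exactly `t+1` lines, and
for every point `x` and line `l` with `x ∉ l` there is exactly one point of `l`
collinear with `x`. -/
def IsGQ (S : SlimPLS P) (t : ℕ) : Prop :=
  S.graph.Connected ∧
  (∀ x : P, ∃ y : P, y ≠ x ∧ ¬ S.Collinear x y) ∧
  (∀ x : P, {l | l ∈ S.lines ∧ x ∈ l}.ncard = t + 1) ∧
  (∀ x : P, ∀ l ∈ S.lines, x ∉ l → ∃! y : P, y ∈ l ∧ S.Collinear x y)

/-- A set of points is an arc if its points are pairwise non-collinear. -/
def IsArc (S : SlimPLS P) (T : Set P) : Prop :=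
  ∀ x ∈ T, ∀ y ∈ T, x ≠ y → ¬ S.Collinear x y

/-- `{a,b,c}` is a complete 3-arc: three pairwise distinct, pairwise
non-collinear points not contained in a 4-arc. -/
def Complete3Arc (S : SlimPLS P) (a b c : P) : Prop :=
  a ≠ b ∧ a ≠ c ∧ b ≠ c ∧ S.IsArc {a, b, c} ∧
  ∀ d : P, d ∉ ({a, b, c} : Set P) → ¬ S.IsArc (insert d {a, b, c})

/-- `{a,b,c}` is a complete 3-arc of the subset `Q`: three pairwise distinct,
pairwise non-collinear points of `Q` not contained in a 4-arc inside `Q`. -/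
def Complete3ArcIn (S : SlimPLS P) (Q : Set P) (a b c : P) : Prop :=
  a ∈ Q ∧ b ∈ Q ∧ c ∈ Q ∧ a ≠ b ∧ a ≠ c ∧ b ≠ c ∧ S.IsArc {a, b, c} ∧
  ∀ d ∈ Q, d ∉ ({a, b, c} : Set P) → ¬ S.IsArc (insert d {a, b, c})

/-- `Q` is a sub-generalized-quadrangle of order `(2,t)` of `S`: together with
the lines of `S` contained in it, `Q` is a `(2,t)`-GQ; in particular any line
meeting `Q` in at least two points is contained in `Q`. -/
def IsSubGQ (S : SlimPLS P) (Q : Set P) (t : ℕ) : Prop :=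
  Q.Nonempty ∧
  (∃ l ∈ S.lines, (l : Set P) ⊆ Q) ∧
  (∀ l ∈ S.lines, ∀ x ∈ l, ∀ y ∈ l, x ≠ y → x ∈ Q → y ∈ Q → (l : Set P) ⊆ Q) ∧
  (SimpleGraph.induce Q S.graph).Connected ∧
  (∀ x ∈ Q, ∃ y ∈ Q, y ≠ x ∧ ¬ S.Collinear x y) ∧
  (∀ x ∈ Q, {l | l ∈ S.lines ∧ x ∈ l ∧ (l : Set P) ⊆ Q}.ncard = t + 1) ∧
  (∀ x ∈ Q, ∀ l ∈ S.lines, (l : Set P) ⊆ Q → x ∉ l → ∃! y : P, y ∈ l ∧ S.Collinear x y)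

/-- `S` is a near hexagon: connected of diameter 3, no point collinear with all
other points, and for every point `x` and line `l` there is a unique point of
`l` nearest to `x`. -/
def IsNearHexagon (S : SlimPLS P) : Prop :=
  S.graph.Connected ∧
  (∀ x y : P, S.graph.dist x y ≤ 3) ∧
  (∃ x y : P, S.graph.dist x y = 3) ∧
  (∀ x : P, ∃ y : P, y ≠ x ∧ ¬ S.Collinear x y) ∧
  (∀ x : P, ∀ l ∈ S.lines, ∃! y : P, y ∈ l ∧ ∀ z ∈ l, S.graph.dist x y ≤ S.graph.dist x z)

/-- `S` is dense: any two points at distance 2 have at least two common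
neighbours. -/
def IsDense (S : SlimPLS P) : Prop :=
  ∀ x y : P, S.graph.dist x y = 2 →
    ∃ u v : P, u ≠ v ∧ S.Collinear x u ∧ S.Collinear u y ∧ S.Collinear x v ∧ S.Collinear v y

/-- `Q` is a quad: a convex subset of diameter 2 in which no point is collinear
with all other points of `Q`. -/
def IsQuad (S : SlimPLS P) (Q : Set P) : Prop :=
  (∀ u ∈ Q, ∀ v ∈ Q, ∀ w : P,
      S.graph.dist u w + S.graph.dist w v = S.graph.dist u v → w ∈ Q) ∧
  (∀ u ∈ Q, ∀ v ∈ Q, S.graph.dist u v ≤ 2) ∧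
  (∃ u ∈ Q, ∃ v ∈ Q, S.graph.dist u v = 2) ∧
  (∀ u ∈ Q, ∃ v ∈ Q, v ≠ u ∧ ¬ S.Collinear u v)

/-- A quad `Q` is of type `(2, t₂)` if every point of `Q` lies on exactly
`t₂ + 1` lines contained in `Q`. -/
def QuadType (S : SlimPLS P) (Q : Set P) (t₂ : ℕ) : Prop :=
  ∀ x ∈ Q, {l | l ∈ S.lines ∧ x ∈ l ∧ (l : Set P) ⊆ Q}.ncard = t₂ + 1

/-- The point-quad pair `(x, Q)` is classical: there is a unique point `y ∈ Q`
nearest to `x`, with `d(x,z) = d(x,y) + d(y,z)` for all `z ∈ Q`. -/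
def IsClassicalPair (S : SlimPLS P) (x : P) (Q : Set P) : Prop :=
  ∃! y : P, y ∈ Q ∧ ∀ z ∈ Q, S.graph.dist x z = S.graph.dist x y + S.graph.dist y z

/-- A quad is classical (big) if every point-quad pair with it is classical. -/
def IsClassicalQuad (S : SlimPLS P) (Q : Set P) : Prop :=
  ∀ x : P, S.IsClassicalPair x Q

/-- A subspace: any line containing two of its points is contained in it. -/
def IsSubspace (S : SlimPLS P) (X : Set P) : Prop :=
  ∀ l ∈ S.lines, ∀ x ∈ l, ∀ y ∈ l, x ≠ y → x ∈ X → y ∈ X → (l : Set P) ⊆ X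

/-- The subspace generated by a set of points. -/
def subspaceGen (S : SlimPLS P) (A : Set P) : Set P :=
  ⋂₀ {X | S.IsSubspace X ∧ A ⊆ X}

/-- `NPdim S` is the rank over `F₂` of the distance-3 adjacency matrix. -/
noncomputable def NPdim [Fintype P] (S : SlimPLS P) : ℕ :=
  Matrix.rank (Matrix.of fun x y : P => if S.graph.dist x y = 3 then (1 : ZMod 2) else 0)

/-- `dimV S` is the dimension of the universal representation module of `S`:
the free `F₂`-vector space on the points modulo the span of the elements
`v_x + v_y + v_z` for the lines `{x,y,z}`. -/
noncomputable def dimV (S : SlimPLS P) : ℕ :=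
  Module.finrank (ZMod 2)
    ((P →₀ ZMod 2) ⧸ Submodule.span (ZMod 2)
      {f : P →₀ ZMod 2 | ∃ l ∈ S.lines, f = ∑ x ∈ l, Finsupp.single x 1})

end SlimPLS

/-- A representation of a slim partial linear space `S`: an assignment of an
order-2 element `r x` of `R` to each point `x`, such that the images generate
`R` and for every line `{x,y,z}` the set `{1, r x, r y, r z}` is a Klein four
subgroup (`r x * r y = r z` for the three pairwise distinct points of a line). -/
structure SlimPLS.Rep {P : Type*} (S : SlimPLS P) (R : Type*) [Group R] where
  r : P → R
  order_two : ∀ x : P, orderOf (r x) = 2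
  gen : Subgroup.closure (Set.range r) = ⊤
  line_rel : ∀ l ∈ S.lines, ∀ x ∈ l, ∀ y ∈ l, ∀ z ∈ l,
    x ≠ y → x ≠ z → y ≠ z → r x * r y = r z

/-- A finite 2-group is extraspecial if its Frattini subgroup, commutator
subgroup and center coincide and have order 2. -/
def IsExtraspecial (G : Type*) [Group G] : Prop :=
  Finite G ∧ IsPGroup 2 G ∧ frattini G = commutator G ∧
    commutator G = Subgroup.center G ∧ Nat.card (Subgroup.center G) = 2

/-!
The involutions `r p` commute pairwise. For collinear points this is the line relation. For
non-collinear `u, v`, pick two common neighbours `a, b`: in the grid `a, b, u, v` the points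
`(a*u)*(b*v)` and `(a*v)*(b*u)` coincide, so `(r a r u)(r b r v) = (r a r v)(r b r u)`, and `r b`
commutes with `r u` and `r v`. Hence `R` is an elementary abelian 2-group.

Fix non-collinear `x, y` with `{x, y}^⊥ = {w₀, …, w₄}`. Every point is one of `x`, `y`, `wₖ`,
`x*wₖ`, `y*wₖ`, `(x*wᵢ)*(y*wⱼ)`, and `w₄` lies on the line through `(x*w₀)*(y*w₁)` and
`(x*w₂)*(y*w₃)`, so `∏ r wₖ = 1` and `R` is generated by `r x, r y, r w₀, …, r w₃`. These six
are independent: thanks to `∏ r wₖ = 1`, a product of some `r wₖ` is a product of at most two of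
them, so every nontrivial product of the six is `r p` or `r p * r q` with `p ≠ q`, which is not
`1` by faithfulness.
-/

section ElementaryAbelian

open Finset

variable {G : Type*} [CommGroup G] {ι : Type*}

/-- Linear independence over `𝔽₂`, written multiplicatively. -/
def ProdIndependent (v : ι → G) : Prop :=
  ∀ s : Finset ι, ∏ i ∈ s, v i = 1 → s = ∅

theorem prod_symmDiff_of_mul_self [DecidableEq ι] (hG : ∀ g : G, g * g = 1) (v : ι → G)
    (s t : Finset ι) : ∏ i ∈ symmDiff s t, v i = (∏ i ∈ s, v i) * ∏ i ∈ t, v i := by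
  have hdisj : Disjoint (symmDiff s t) (s ∩ t) := disjoint_symmDiff_inf s t
  have hunion : s ∪ t = symmDiff s t ∪ s ∩ t := (symmDiff_sup_inf s t).symm
  rw [← prod_union_inter, hunion, prod_union hdisj, mul_assoc, hG, mul_one]

theorem nat_card_eq_two_pow_of_prodIndependent [Fintype ι] [DecidableEq ι]
    (hG : ∀ g : G, g * g = 1) {v : ι → G} (hgen : Subgroup.closure (Set.range v) = ⊤)
    (hv : ProdIndependent v) : Nat.card G = 2 ^ Fintype.card ι := by
  set f : Finset ι → G := fun s => ∏ i ∈ s, v i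
  have hf : ∀ s t, f (symmDiff s t) = f s * f t := prod_symmDiff_of_mul_self hG v
  have hinj : f.Injective := fun s t hst =>
    symmDiff_eq_bot.mp (hv _ ((hf s t).trans (by rw [hst, hG])))
  let H : Subgroup G :=
    { carrier := Set.range f
      mul_mem' := by rintro _ _ ⟨s, rfl⟩ ⟨t, rfl⟩; exact ⟨_, hf s t⟩
      one_mem' := ⟨∅, prod_empty⟩
      inv_mem' := by
        rintro _ ⟨s, rfl⟩
        exact ⟨s, (inv_eq_of_mul_eq_one_right (hG _)).symm⟩ }
  have hsurj : f.Surjective := fun g => by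
    have hle : Subgroup.closure (Set.range v) ≤ H :=
      (Subgroup.closure_le H).mpr (Set.range_subset_iff.mpr fun i => ⟨{i}, prod_singleton v i⟩)
    exact hle (hgen ▸ Subgroup.mem_top g)
  rw [← Nat.card_congr (Equiv.ofBijective f ⟨hinj, hsurj⟩), Nat.card_eq_fintype_card,
    Fintype.card_finset]

theorem prod_option_elim [DecidableEq ι] (g : G) (v : ι → G) (s : Finset (Option ι)) :
    ∏ o ∈ s, o.elim g v =
      if none ∈ s then g * ∏ i ∈ s.eraseNone, v i else ∏ i ∈ s.eraseNone, v i := by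
  split_ifs with h
  · conv_lhs => rw [← insert_eq_of_mem h, ← insertNone_eraseNone, prod_insertNone]
    rfl
  · conv_lhs => rw [← erase_eq_of_notMem h, ← map_some_eraseNone, prod_map]
    rfl

theorem ProdIndependent.option_elim [DecidableEq ι] (hG : ∀ g : G, g * g = 1) {v : ι → G}
    (hv : ProdIndependent v) {g : G} (hg : ∀ s : Finset ι, ∏ i ∈ s, v i ≠ g) :
    ProdIndependent fun o : Option ι => o.elim g v := by
  intro s hs
  rw [prod_option_elim] at hs
  split_ifs at hs with h
  · exact absurd (eq_inv_of_mul_eq_one_right hs ▸ inv_eq_of_mul_eq_one_right (hG g)) (hg _)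
  · have he := hv _ hs
    ext (_ | i)
    · simpa using h
    · simpa using congrArg (i ∈ ·) he

theorem prod_compl_eq_of_mul_self [Fintype ι] [DecidableEq ι] (hG : ∀ g : G, g * g = 1)
    {v : ι → G} (hv : ∏ i, v i = 1) (s : Finset ι) :
    ∏ i ∈ sᶜ, v i = ∏ i ∈ s, v i := by
  rw [← mul_right_inj (∏ i ∈ s, v i), prod_mul_prod_compl, hv, hG]

theorem Finset.card_le_two_cases [DecidableEq ι] {s : Finset ι} (hs : s.card ≤ 2) :
    s = ∅ ∨ (∃ a, s = {a}) ∨ ∃ a b, a ≠ b ∧ s = {a, b} := by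
  interval_cases h : s.card
  · exact .inl (card_eq_zero.mp h)
  · exact .inr (.inl (card_eq_one.mp h))
  · exact .inr (.inr (card_eq_two.mp h))

/-- Modulo the relation `∏ v = 1`, a subset of five generators or its complement has at most
two elements. -/
theorem prod_castSucc_cases (hG : ∀ g : G, g * g = 1) {v : Fin 5 → G} (hv : ∏ i, v i = 1)
    (s : Finset (Fin 4)) :
    s = ∅ ∨ (∃ k, ∏ i ∈ s, v i.castSucc = v k) ∨
      ∃ k l, k ≠ l ∧ ∏ i ∈ s, v i.castSucc = v k * v l := by
  set s' := s.map Fin.castSuccEmb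
  have hs' : ∏ i ∈ s, v i.castSucc = ∏ i ∈ s', v i := by simp [s']
  obtain ⟨t, ht, hst, hprod⟩ : ∃ t : Finset (Fin 5),
      t.card ≤ 2 ∧ (t = ∅ → s = ∅) ∧ ∏ i ∈ s, v i.castSucc = ∏ i ∈ t, v i := by
    by_cases hcard : s.card ≤ 2
    · exact ⟨s', by simpa [s'] using hcard, by simp [s'], hs'⟩
    · refine ⟨s'ᶜ, ?_, fun h => ?_, hs'.trans (prod_compl_eq_of_mul_self hG hv s').symm⟩
      · rw [card_compl, card_map, Fintype.card_fin]
        omega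
      · have : Fin.last 4 ∈ s'ᶜ := by
          rw [mem_compl, mem_map]
          rintro ⟨i, -, hi⟩
          exact Fin.castSucc_ne_last i hi
        simp [h] at this
  rcases Finset.card_le_two_cases ht with rfl | ⟨k, rfl⟩ | ⟨k, l, hkl, rfl⟩
  · exact .inl (hst rfl)
  · exact .inr (.inl ⟨k, by rw [hprod, prod_singleton]⟩)
  · exact .inr (.inr ⟨k, l, hkl, by rw [hprod, prod_pair hkl]⟩)

end ElementaryAbelian

namespace SlimPLS

variable {P : Type*} {S : SlimPLS P} {a b c x y z u v : P}

theorem Collinear.symm (h : S.Collinear x y) : S.Collinear y x :=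
  ⟨h.1.symm, let ⟨l, hl, hx, hy⟩ := h.2; ⟨l, hl, hy, hx⟩⟩

theorem Collinear.ne (h : S.Collinear x y) : x ≠ y := h.1

def IsLine (S : SlimPLS P) (x y z : P) : Prop := ({x, y, z} : Finset P) ∈ S.lines

theorem IsLine.swap_left (h : S.IsLine x y z) : S.IsLine y x z := by
  rwa [IsLine, Finset.insert_comm]

theorem IsLine.swap_right (h : S.IsLine x y z) : S.IsLine x z y := by
  rwa [IsLine, Finset.pair_comm]

theorem IsLine.rotate (h : S.IsLine x y z) : S.IsLine y z x :=
  h.swap_left.swap_right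

theorem IsLine.ne (h : S.IsLine x y z) : x ≠ y := by
  rintro rfl
  have h3 := S.three_points _ h
  rw [Finset.insert_idem] at h3
  have := Finset.card_le_two (a := x) (b := z)
  omega

theorem IsLine.collinear (h : S.IsLine x y z) : S.Collinear x y :=
  ⟨h.ne, _, h, by simp, by simp⟩

theorem Collinear.exists_isLine (h : S.Collinear x y) : ∃ z, S.IsLine x y z := by
  obtain ⟨hne, l, hl, hx, hy⟩ := h
  have hy' : y ∈ l.erase x := Finset.mem_erase.mpr ⟨hne.symm, hy⟩
  obtain ⟨z, hz⟩ : ∃ z, (l.erase x).erase y = {z} := by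
    rw [← Finset.card_eq_one, Finset.card_erase_of_mem hy', Finset.card_erase_of_mem hx,
      S.three_points l hl]
  refine ⟨z, ?_⟩
  have hl' : l = {x, y, z} := by
    rw [← Finset.insert_erase hx, ← Finset.insert_erase hy', hz]
  rwa [IsLine, ← hl']

theorem IsLine.unique (h : S.IsLine x y z) (h' : S.IsLine x y v) : v = z := by
  have heq := S.unique_line _ h' _ h x y h.ne (by simp) (by simp) (by simp) (by simp)
  have hv : v ∈ ({x, y, z} : Finset P) := heq ▸ (by simp)
  simp only [Finset.mem_insert, Finset.mem_singleton] at hv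
  rcases hv with rfl | rfl | rfl
  · exact (h'.swap_right.ne rfl).elim
  · exact (h'.swap_left.swap_right.ne rfl).elim
  · rfl

/-- The point `x * y`; a junk value when `x` and `y` are not collinear. -/
noncomputable def third (S : SlimPLS P) (x y : P) : P :=
  if h : ∃ z, S.IsLine x y z then h.choose else x

theorem Collinear.isLine_third (h : S.Collinear x y) : S.IsLine x y (S.third x y) := by
  have hex := h.exists_isLine
  rw [third, dif_pos hex]
  exact hex.choose_spec

theorem IsLine.third_eq (h : S.IsLine x y z) : S.third x y = z :=
  h.unique h.collinear.isLine_third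

namespace IsGQ

variable {t : ℕ} {p q r p' : P}

theorem eq_of_isLine (hGQ : S.IsGQ t) (h : S.IsLine a b c) (ha : S.Collinear z a)
    (hb : S.Collinear z b) : z = c := by
  by_contra hzc
  have hz : z ∉ ({a, b, c} : Finset P) := by
    simp only [Finset.mem_insert, Finset.mem_singleton, not_or]
    exact ⟨ha.ne, hb.ne, hzc⟩
  obtain ⟨_, _, huniq⟩ := hGQ.2.2.2 z _ h hz
  exact h.ne ((huniq a ⟨by simp, ha⟩).trans (huniq b ⟨by simp, hb⟩).symm)

theorem collinear_of_isLine (hGQ : S.IsGQ t) (h : S.IsLine a b c) (ha : ¬ S.Collinear z a)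
    (hb : ¬ S.Collinear z b) : S.Collinear z c := by
  have hz : z ∉ ({a, b, c} : Finset P) := by
    simp only [Finset.mem_insert, Finset.mem_singleton]
    rintro (rfl | rfl | rfl)
    · exact hb h.collinear
    · exact ha h.collinear.symm
    · exact ha h.rotate.rotate.collinear
  obtain ⟨w, ⟨hw, hzw⟩, -⟩ := hGQ.2.2.2 z _ h hz
  simp only [Finset.mem_insert, Finset.mem_singleton] at hw
  rcases hw with rfl | rfl | rfl
  · exact absurd hzw ha
  · exact absurd hzw hb
  · exact hzw

theorem not_collinear_of_perp (hGQ : S.IsGQ t) (hab : a ≠ b) (hau : S.Collinear a u)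
    (hbu : S.Collinear b u) (hav : S.Collinear a v) (hbv : S.Collinear b v) :
    ¬ S.Collinear u v := fun huv =>
  let ⟨_, hc⟩ := huv.exists_isLine
  hab ((hGQ.eq_of_isLine hc hau hav).trans (hGQ.eq_of_isLine hc hbu hbv).symm)

theorem collinear_of_grid (hGQ : S.IsGQ t) (hab : a ≠ b) (huv : u ≠ v) (hp : S.IsLine a u p)
    (hq : S.IsLine b v q) (hbu : S.Collinear b u) (hav : S.Collinear a v) :
    S.Collinear p q :=
  hGQ.collinear_of_isLine hq
    (fun h => hab (hGQ.eq_of_isLine hp.rotate hbu h.symm).symm)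
    (fun h => huv (hGQ.eq_of_isLine hp.swap_right hav.symm h.symm).symm)

theorem collinear_diag_of_grid (hGQ : S.IsGQ t) (hab : ¬ S.Collinear a b) (hne : a ≠ b)
    (hp : S.IsLine a u p) (hq : S.IsLine b v q) (hp' : S.IsLine a v p') (hbu : S.Collinear b u)
    (hr : S.IsLine p q r) : S.Collinear r p' := by
  refine (hGQ.collinear_of_isLine hr (fun h => ?_) (fun h => ?_)).symm
  · have hu : p' = u := hGQ.eq_of_isLine hp.swap_right hp'.rotate.rotate.collinear h
    exact hGQ.not_collinear_of_perp hne hp.collinear hbu hp'.collinear hq.collinear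
      (hu ▸ hp'.rotate.collinear.symm)
  · have hb : p' = b := hGQ.eq_of_isLine hq.rotate hp'.rotate.collinear.symm h
    exact hab (hb ▸ hp'.rotate.rotate.collinear.symm)

theorem third_third_eq_of_grid (hGQ : S.IsGQ t) (hab : ¬ S.Collinear a b) (hne : a ≠ b)
    (huv : u ≠ v) (hau : S.Collinear a u) (hbu : S.Collinear b u) (hav : S.Collinear a v)
    (hbv : S.Collinear b v) :
    S.third (S.third a u) (S.third b v) = S.third (S.third a v) (S.third b u) := by
  have hp := hau.isLine_third
  have hq := hbv.isLine_third
  have hp' := hav.isLine_third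
  have hq' := hbu.isLine_third
  have hr := (hGQ.collinear_of_grid hne huv hp hq hbu hav).isLine_third
  have hr' := (hGQ.collinear_of_grid hne huv.symm hp' hq' hbv hau).isLine_third
  exact hGQ.eq_of_isLine hr' (hGQ.collinear_diag_of_grid hab hne hp hq hp' hbu hr)
    (hGQ.collinear_diag_of_grid (fun h => hab h.symm) hne.symm hq hp hq' hav hr.swap_left)

theorem exists_perp_enum (hGQ : S.IsGQ t) (hab : ¬ S.Collinear a b) (hne : a ≠ b) :
    ∃ w : Fin (t + 1) → P, Function.Injective w ∧ (∀ i, S.Collinear a (w i)) ∧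
      (∀ i, S.Collinear b (w i)) ∧
      ∀ v, S.Collinear a v → S.Collinear b v → ∃ i, v = w i := by
  set L := {l | l ∈ S.lines ∧ b ∈ l}
  have hcard : Nat.card L = t + 1 := by rw [Nat.card_coe_set_eq]; exact hGQ.2.2.1 b
  let e : L ≃ Fin (t + 1) := (Nat.equivFinOfCardPos (by omega)).trans (finCongr hcard)
  have ha : ∀ l : L, a ∉ (l : Finset P) := fun l ha =>
    hab ⟨hne, l, l.2.1, ha, l.2.2⟩
  choose w hw huniq using fun i => hGQ.2.2.2 a _ (e.symm i).2.1 (ha (e.symm i))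
  have hwb : ∀ i, w i ≠ b := fun i h => hab (h ▸ (hw i).2)
  refine ⟨w, fun i j hij => ?_, fun i => (hw i).2, fun i => ⟨(hwb i).symm, _, (e.symm i).2.1,
    (e.symm i).2.2, (hw i).1⟩, fun v hav hbv => ?_⟩
  · refine e.symm.injective (Subtype.ext (S.unique_line _ (e.symm i).2.1 _ (e.symm j).2.1 _ _
      (hwb i) (hw i).1 (e.symm i).2.2 (hij ▸ (hw j).1) (e.symm j).2.2))
  · obtain ⟨_, l, hl, hbl, hvl⟩ := hbv
    refine ⟨e ⟨l, hl, hbl⟩, huniq _ v ⟨?_, hav⟩⟩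
    simpa using hvl

end IsGQ

section Rep

variable {R : Type*} [Group R]

theorem Rep.mul_of_isLine (ρ : S.Rep R) (h : S.IsLine x y z) : ρ.r x * ρ.r y = ρ.r z :=
  ρ.line_rel _ h x (by simp) y (by simp) z (by simp) h.ne h.swap_right.ne h.rotate.ne

theorem Rep.mul_self (ρ : S.Rep R) (p : P) : ρ.r p * ρ.r p = 1 := by
  rw [← pow_two, ← ρ.order_two p, pow_orderOf_eq_one]

theorem Rep.ne_one (ρ : S.Rep R) (p : P) : ρ.r p ≠ 1 := fun h => by
  have h2 := ρ.order_two p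
  rw [h, orderOf_one] at h2
  exact absurd h2 (by decide)

theorem Rep.eq_mul_of_mul_eq (ρ : S.Rep R) {g h : R} (hg : g * ρ.r p = h) : g = h * ρ.r p := by
  rw [← hg, mul_assoc, ρ.mul_self, mul_one]

theorem Rep.commute_of_collinear (ρ : S.Rep R) (h : S.Collinear x y) : Commute (ρ.r x) (ρ.r y) :=
  let ⟨_, hz⟩ := h.exists_isLine
  (ρ.mul_of_isLine hz).trans (ρ.mul_of_isLine hz.swap_left).symm

theorem Rep.commute_of_perp {t : ℕ} (ρ : S.Rep R) (hGQ : S.IsGQ t) (hab : ¬ S.Collinear a b)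
    (hne : a ≠ b) (huv : u ≠ v) (hau : S.Collinear a u) (hbu : S.Collinear b u)
    (hav : S.Collinear a v) (hbv : S.Collinear b v) : Commute (ρ.r u) (ρ.r v) := by
  have hgrid : ρ.r a * ρ.r u * (ρ.r b * ρ.r v) = ρ.r a * ρ.r v * (ρ.r b * ρ.r u) := by
    rw [ρ.mul_of_isLine hau.isLine_third, ρ.mul_of_isLine hbv.isLine_third,
      ρ.mul_of_isLine hav.isLine_third, ρ.mul_of_isLine hbu.isLine_third,
      ρ.mul_of_isLine (hGQ.collinear_of_grid hne huv hau.isLine_third hbv.isLine_third hbu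
        hav).isLine_third,
      ρ.mul_of_isLine (hGQ.collinear_of_grid hne huv.symm hav.isLine_third hbu.isLine_third hbv
        hau).isLine_third,
      hGQ.third_third_eq_of_grid hab hne huv hau hbu hav hbv]
  rw [← (ρ.commute_of_collinear hbu).mul_mul_mul_comm,
    ← (ρ.commute_of_collinear hbv).mul_mul_mul_comm] at hgrid
  exact mul_left_cancel hgrid

theorem Rep.commute {t : ℕ} (ρ : S.Rep R) (hGQ : S.IsGQ (t + 1)) (a b : P) :
    Commute (ρ.r a) (ρ.r b) := by
  by_cases hne : a = b
  · exact hne ▸ Commute.refl _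
  by_cases hab : S.Collinear a b
  · exact ρ.commute_of_collinear hab
  obtain ⟨w, hwinj, hwa, hwb, -⟩ := hGQ.exists_perp_enum hab hne
  have h01 : w 0 ≠ w 1 := hwinj.ne (by simp)
  exact ρ.commute_of_perp hGQ (hGQ.not_collinear_of_perp hne (hwa 0) (hwb 0) (hwa 1) (hwb 1))
    h01 hne (hwa 0).symm (hwa 1).symm (hwb 0).symm (hwb 1).symm

theorem Rep.mul_comm {t : ℕ} (ρ : S.Rep R) (hGQ : S.IsGQ (t + 1)) (g h : R) : g * h = h * g := by
  have hle := Subgroup.closure_le_centralizer_centralizer (Set.range ρ.r)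
  rw [ρ.gen] at hle
  refine Set.centralizer_centralizer_comm_of_comm ?_ g (hle trivial) h (hle trivial)
  rintro _ ⟨a, rfl⟩ _ ⟨b, rfl⟩
  exact ρ.commute hGQ a b

end Rep

section CommRep

variable {R : Type*} [CommGroup R]

theorem Rep.mul_self_eq_one (ρ : S.Rep R) (g : R) : g * g = 1 := by
  have hle : Subgroup.closure (Set.range ρ.r) ≤ (powMonoidHom 2 : R →* R).ker := by
    rw [Subgroup.closure_le]
    rintro _ ⟨p, rfl⟩
    simp [pow_two, ρ.mul_self]
  rw [ρ.gen] at hle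
  simpa [pow_two] using hle (Subgroup.mem_top g)

end CommRep

structure Frame (S : SlimPLS P) where
  x : P
  y : P
  w : Fin 5 → P
  x_ne_y : x ≠ y
  not_collinear : ¬ S.Collinear x y
  w_injective : Function.Injective w
  collinear_x_w : ∀ i, S.Collinear x (w i)
  collinear_y_w : ∀ i, S.Collinear y (w i)
  exists_eq_w : ∀ v, S.Collinear x v → S.Collinear y v → ∃ i, v = w i

namespace Frame

variable (F : Frame S) {i j k : Fin 5}

theorem nonempty (hGQ : S.IsGQ 4) : Nonempty (Frame S) := by
  obtain ⟨x⟩ := S.nonempty_pts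
  obtain ⟨y, hyx, hxy⟩ := hGQ.2.1 x
  obtain ⟨w, hw, hxw, hyw, hcov⟩ := hGQ.exists_perp_enum hxy hyx.symm
  exact ⟨⟨x, y, w, hyx.symm, hxy, hw, hxw, hyw, hcov⟩⟩

def symm : Frame S :=
  ⟨F.y, F.x, F.w, F.x_ne_y.symm, fun h => F.not_collinear h.symm, F.w_injective,
    F.collinear_y_w, F.collinear_x_w, fun v hx hy => F.exists_eq_w v hy hx⟩

noncomputable def xw (i : Fin 5) : P := S.third F.x (F.w i)

noncomputable def yw (i : Fin 5) : P := S.third F.y (F.w i)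

noncomputable def q (i j : Fin 5) : P := S.third (F.xw i) (F.yw j)

theorem isLine_xw (i : Fin 5) : S.IsLine F.x (F.w i) (F.xw i) :=
  (F.collinear_x_w i).isLine_third

theorem isLine_yw (i : Fin 5) : S.IsLine F.y (F.w i) (F.yw i) := F.symm.isLine_xw i

theorem not_collinear_y_xw (hGQ : S.IsGQ 4) (i : Fin 5) : ¬ S.Collinear F.y (F.xw i) := fun h =>
  F.x_ne_y (hGQ.eq_of_isLine (F.isLine_xw i).rotate (F.collinear_y_w i) h).symm

theorem not_collinear_w_xw (hGQ : S.IsGQ 4) (hki : k ≠ i) :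
    ¬ S.Collinear (F.w k) (F.xw i) := fun h =>
  hki (F.w_injective (hGQ.eq_of_isLine (F.isLine_xw i).swap_right (F.collinear_x_w k).symm h))

theorem not_collinear_xw_yw (hGQ : S.IsGQ 4) (i : Fin 5) :
    ¬ S.Collinear (F.xw i) (F.yw i) := fun h => by
  have hy := hGQ.eq_of_isLine (F.isLine_yw i).rotate (F.isLine_xw i).rotate.collinear.symm h
  exact F.not_collinear (hy ▸ (F.isLine_xw i).rotate.rotate.collinear).symm

theorem collinear_xw_yw (hGQ : S.IsGQ 4) (hij : i ≠ j) : S.Collinear (F.xw i) (F.yw j) :=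
  hGQ.collinear_of_grid F.x_ne_y (F.w_injective.ne hij) (F.isLine_xw i) (F.isLine_yw j)
    (F.collinear_y_w i) (F.collinear_x_w j)

theorem isLine_q (hGQ : S.IsGQ 4) (hij : i ≠ j) : S.IsLine (F.xw i) (F.yw j) (F.q i j) :=
  (F.collinear_xw_yw hGQ hij).isLine_third

theorem collinear_w_q (hGQ : S.IsGQ 4) (hij : i ≠ j) (hki : k ≠ i) (hkj : k ≠ j) :
    S.Collinear (F.w k) (F.q i j) :=
  hGQ.collinear_of_isLine (F.isLine_q hGQ hij) (F.not_collinear_w_xw hGQ hki)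
    (F.symm.not_collinear_w_xw hGQ hkj)

theorem not_collinear_xw_q (hGQ : S.IsGQ 4) (hij : i ≠ j) (hki : k ≠ i) (hkj : k ≠ j) :
    ¬ S.Collinear (F.xw k) (F.q i j) := fun h => by
  have hk := hGQ.eq_of_isLine (F.isLine_q hGQ hij).rotate (F.collinear_xw_yw hGQ hkj) h
  exact F.not_collinear_w_xw hGQ hki (hk ▸ (F.isLine_xw k).rotate.collinear)

theorem not_collinear_yw_q (hGQ : S.IsGQ 4) (hij : i ≠ j) (hki : k ≠ i) (hkj : k ≠ j) :
    ¬ S.Collinear (F.yw k) (F.q i j) := fun h => by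
  have hk := hGQ.eq_of_isLine (F.isLine_q hGQ hij).swap_right
    (F.collinear_xw_yw hGQ hki.symm).symm h
  exact F.symm.not_collinear_w_xw hGQ hkj
    (show S.Collinear (F.w k) (F.yw j) from hk ▸ (F.isLine_yw k).rotate.collinear)

theorem isLine_q_q_w (hGQ : S.IsGQ 4) : S.IsLine (F.q 0 1) (F.q 2 3) (F.w 4) := by
  have hcol : S.Collinear (F.q 2 3) (F.q 0 1) :=
    hGQ.collinear_of_isLine (F.isLine_q hGQ (by decide))
      (fun h => F.not_collinear_xw_q hGQ (by decide) (by decide) (by decide) h.symm)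
      (fun h => F.not_collinear_yw_q hGQ (by decide) (by decide) (by decide) h.symm)
  have hl := hcol.symm.isLine_third
  rwa [← hGQ.eq_of_isLine hl (F.collinear_w_q hGQ (k := 4) (by decide) (by decide) (by decide))
    (F.collinear_w_q hGQ (k := 4) (by decide) (by decide) (by decide))] at hl

theorem exists_eq_w_or_eq_xw (hGQ : S.IsGQ 4) {v : P} (hv : S.Collinear F.x v) :
    ∃ k, v = F.w k ∨ v = F.xw k := by
  obtain ⟨c, hc⟩ := hv.exists_isLine
  by_cases hyv : S.Collinear F.y v
  · obtain ⟨k, rfl⟩ := F.exists_eq_w v hv hyv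
    exact ⟨k, .inl rfl⟩
  · obtain ⟨k, rfl⟩ := F.exists_eq_w c hc.swap_right.collinear
      (hGQ.collinear_of_isLine hc (fun h => F.not_collinear h.symm) hyv)
    exact ⟨k, .inr hc.swap_right.third_eq.symm⟩

theorem not_forall_collinear_w (hGQ : S.IsGQ 4) {z : P} (hzx : z ≠ F.x) (hzy : z ≠ F.y)
    (hall : ∀ k, S.Collinear z (F.w k)) : False := by
  have hh := (hall 1).isLine_third
  have hq := (hGQ.collinear_of_grid hzx.symm (F.w_injective.ne (by decide)) (F.isLine_xw 0) hh
    (hall 0) (F.collinear_x_w 1)).isLine_third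
  have hwh : ∀ m, m ≠ 1 → ¬ S.Collinear (F.w m) (S.third z (F.w 1)) := fun m hm hc =>
    hm (F.w_injective (hGQ.eq_of_isLine hh.swap_right (hall m).symm hc))
  have hyq := hGQ.collinear_of_isLine hq (F.not_collinear_y_xw hGQ 0)
    (fun hy => hzy (hGQ.eq_of_isLine hh.rotate (F.collinear_y_w 1) hy).symm)
  obtain ⟨k, hk | hk⟩ := F.symm.exists_eq_w_or_eq_xw hGQ hyq
  · have hk0 : k = 0 := by
      by_contra hk0
      exact F.not_collinear_w_xw hGQ hk0 (hk ▸ hq.rotate.rotate.collinear)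
    exact hwh 0 (by decide) (hk0 ▸ hk ▸ hq.rotate.collinear.symm)
  · have hm : ∀ m, m ≠ 0 → m ≠ 1 → m = k := fun m hm0 hm1 => by
      by_contra hmk
      exact F.symm.not_collinear_w_xw hGQ hmk
        (hk ▸ hGQ.collinear_of_isLine hq (F.not_collinear_w_xw hGQ hm0) (hwh m hm1))
    exact absurd ((hm 2 (by decide) (by decide)).trans (hm 3 (by decide) (by decide)).symm)
      (by decide)

theorem exists_eq_q (hGQ : S.IsGQ 4) {z : P} (hzx : z ≠ F.x) (hzy : z ≠ F.y)
    (hxz : ¬ S.Collinear F.x z) (hyz : ¬ S.Collinear F.y z) : ∃ i j, i ≠ j ∧ z = F.q i j := by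
  obtain ⟨i, hzi⟩ : ∃ i, ¬ S.Collinear z (F.w i) := by
    by_contra! h
    exact F.not_forall_collinear_w hGQ hzx hzy h
  have hzx' := hGQ.collinear_of_isLine (F.isLine_xw i) (fun h => hxz h.symm) hzi
  have hzy' := hGQ.collinear_of_isLine (F.isLine_yw i) (fun h => hyz h.symm) hzi
  have hc := hzx'.isLine_third
  have hyc := hGQ.collinear_of_isLine hc (fun h => hyz h) (F.not_collinear_y_xw hGQ i)
  obtain ⟨k, hk | hk⟩ := F.symm.exists_eq_w_or_eq_xw hGQ hyc <;> rw [hk] at hc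
  · obtain rfl : k = i := by
      by_contra h
      exact F.not_collinear_w_xw hGQ h hc.rotate.collinear.symm
    exact absurd hc.swap_right.collinear hzi
  · have hki : i ≠ k := by
      rintro rfl
      exact F.not_collinear_xw_yw hGQ i hc.rotate.collinear
    exact ⟨i, k, hki, hGQ.eq_of_isLine (F.isLine_q hGQ hki) hzx' hc.swap_right.collinear⟩

theorem point_cases (hGQ : S.IsGQ 4) (p : P) :
    p = F.x ∨ p = F.y ∨ (∃ k, p = F.w k ∨ p = F.xw k ∨ p = F.yw k) ∨
      ∃ i j, i ≠ j ∧ p = F.q i j := by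
  by_cases hpx : p = F.x
  · exact .inl hpx
  by_cases hpy : p = F.y
  · exact .inr (.inl hpy)
  by_cases hxp : S.Collinear F.x p
  · obtain ⟨k, hk | hk⟩ := F.exists_eq_w_or_eq_xw hGQ hxp
    exacts [.inr (.inr (.inl ⟨k, .inl hk⟩)), .inr (.inr (.inl ⟨k, .inr (.inl hk)⟩))]
  by_cases hyp : S.Collinear F.y p
  · obtain ⟨k, hk | hk⟩ := F.symm.exists_eq_w_or_eq_xw hGQ hyp
    exacts [.inr (.inr (.inl ⟨k, .inl hk⟩)), .inr (.inr (.inl ⟨k, .inr (.inr hk)⟩))]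
  exact .inr (.inr (.inr (F.exists_eq_q hGQ hpx hpy hxp hyp)))

section Rep

variable {R : Type*} [CommGroup R]

theorem prod_rep_w (hGQ : S.IsGQ 4) (ρ : S.Rep R) : ∏ k, ρ.r (F.w k) = 1 := by
  have h4 := ρ.mul_of_isLine (F.isLine_q_q_w hGQ)
  rw [← ρ.mul_of_isLine (F.isLine_q hGQ (i := 0) (j := 1) (by decide)),
    ← ρ.mul_of_isLine (F.isLine_q hGQ (i := 2) (j := 3) (by decide)),
    ← ρ.mul_of_isLine (F.isLine_xw 0), ← ρ.mul_of_isLine (F.isLine_yw 1),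
    ← ρ.mul_of_isLine (F.isLine_xw 2), ← ρ.mul_of_isLine (F.isLine_yw 3)] at h4
  rw [Fin.prod_univ_five, ← h4]
  calc _ = ρ.r F.x * ρ.r F.x * (ρ.r F.y * ρ.r F.y) * (ρ.r (F.w 0) * ρ.r (F.w 0)) *
        (ρ.r (F.w 1) * ρ.r (F.w 1)) * (ρ.r (F.w 2) * ρ.r (F.w 2)) *
        (ρ.r (F.w 3) * ρ.r (F.w 3)) := by ac_rfl
    _ = 1 := by simp only [ρ.mul_self, one_mul]

/-- Indexed by `Option (Option (Fin 4))` so that independence follows by adjoining `x`, then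
`y`, to the `w k`. -/
def gens (ρ : S.Rep R) : Option (Option (Fin 4)) → R :=
  fun o => o.elim (ρ.r F.y) fun o => o.elim (ρ.r F.x) fun k => ρ.r (F.w k.castSucc)

theorem closure_range_gens (hGQ : S.IsGQ 4) (ρ : S.Rep R) :
    Subgroup.closure (Set.range (F.gens ρ)) = ⊤ := by
  set H := Subgroup.closure (Set.range (F.gens ρ))
  have hx : ρ.r F.x ∈ H := Subgroup.subset_closure ⟨some none, rfl⟩
  have hy : ρ.r F.y ∈ H := Subgroup.subset_closure ⟨none, rfl⟩
  have hw' : ∀ k : Fin 4, ρ.r (F.w k.castSucc) ∈ H := fun k =>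
    Subgroup.subset_closure ⟨some (some k), rfl⟩
  have hw : ∀ k, ρ.r (F.w k) ∈ H := Fin.lastCases (by
    have hprod := F.prod_rep_w hGQ ρ
    rw [Fin.prod_univ_castSucc] at hprod
    rw [eq_inv_of_mul_eq_one_right hprod]
    exact H.inv_mem (H.prod_mem fun k _ => hw' k)) hw'
  have hline : ∀ {a b c}, S.IsLine a b c → ρ.r a ∈ H → ρ.r b ∈ H → ρ.r c ∈ H :=
    fun h ha hb => ρ.mul_of_isLine h ▸ H.mul_mem ha hb
  have hxw : ∀ k, ρ.r (F.xw k) ∈ H := fun k => hline (F.isLine_xw k) hx (hw k)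
  have hyw : ∀ k, ρ.r (F.yw k) ∈ H := fun k => hline (F.isLine_yw k) hy (hw k)
  rw [eq_top_iff, ← ρ.gen, Subgroup.closure_le]
  rintro _ ⟨p, rfl⟩
  rcases F.point_cases hGQ p with rfl | rfl | ⟨k, rfl | rfl | rfl⟩ | ⟨i, j, hij, rfl⟩
  exacts [hx, hy, hw k, hxw k, hyw k, hline (F.isLine_q hGQ hij) (hxw i) (hyw j)]

theorem prod_w_ne_rep_x (hGQ : S.IsGQ 4) (ρ : S.Rep R) (hf : Function.Injective ρ.r)
    (s : Finset (Fin 4)) : ∏ k ∈ s, ρ.r (F.w k.castSucc) ≠ ρ.r F.x := by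
  intro hs
  rcases prod_castSucc_cases ρ.mul_self_eq_one (F.prod_rep_w hGQ ρ) s with
    rfl | ⟨k, hk⟩ | ⟨k, l, -, hkl⟩
  · exact ρ.ne_one F.x (by rw [← hs, Finset.prod_empty])
  · rw [hk] at hs
    exact (F.collinear_x_w k).ne (hf hs).symm
  · rw [hkl] at hs
    have h := ρ.eq_mul_of_mul_eq hs
    rw [ρ.mul_of_isLine (F.isLine_xw l)] at h
    exact F.not_collinear_y_xw hGQ l (hf h ▸ F.collinear_y_w k)

theorem prodIndependent_rep_w (hGQ : S.IsGQ 4) (ρ : S.Rep R) (hf : Function.Injective ρ.r) :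
    ProdIndependent fun k : Fin 4 => ρ.r (F.w k.castSucc) := by
  intro s hs
  rcases prod_castSucc_cases ρ.mul_self_eq_one (F.prod_rep_w hGQ ρ) s with
    h | ⟨k, hk⟩ | ⟨k, l, hkl, hkl'⟩
  · exact h
  · exact absurd (hk ▸ hs) (ρ.ne_one _)
  · rw [hkl', ← ρ.mul_self (F.w l)] at hs
    exact absurd (F.w_injective (hf (mul_right_cancel hs))) hkl

theorem rep_x_mul_prod_w_ne_rep_y (hGQ : S.IsGQ 4) (ρ : S.Rep R) (hf : Function.Injective ρ.r)
    (s : Finset (Fin 4)) : ρ.r F.x * ∏ k ∈ s, ρ.r (F.w k.castSucc) ≠ ρ.r F.y := by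
  intro hs
  rcases prod_castSucc_cases ρ.mul_self_eq_one (F.prod_rep_w hGQ ρ) s with
    rfl | ⟨k, hk⟩ | ⟨k, l, -, hkl⟩
  · rw [Finset.prod_empty, mul_one] at hs
    exact F.x_ne_y (hf hs)
  · rw [hk, ρ.mul_of_isLine (F.isLine_xw k)] at hs
    exact F.not_collinear (hf hs ▸ (F.isLine_xw k).rotate.rotate.collinear).symm
  · rw [hkl, ← mul_assoc, ρ.mul_of_isLine (F.isLine_xw k)] at hs
    have h := ρ.eq_mul_of_mul_eq hs
    rw [ρ.mul_of_isLine (F.isLine_yw l)] at h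
    exact F.not_collinear_y_xw hGQ k (hf h ▸ (F.isLine_yw l).swap_right.collinear)

theorem prodIndependent_gens (hGQ : S.IsGQ 4) (ρ : S.Rep R) (hf : Function.Injective ρ.r) :
    ProdIndependent (F.gens ρ) := by
  refine ProdIndependent.option_elim ρ.mul_self_eq_one (ProdIndependent.option_elim
    ρ.mul_self_eq_one (F.prodIndependent_rep_w hGQ ρ hf) (F.prod_w_ne_rep_x hGQ ρ hf))
    fun s hs => ?_
  rw [prod_option_elim] at hs
  split_ifs at hs
  exacts [F.rep_x_mul_prod_w_ne_rep_y hGQ ρ hf _ hs, F.symm.prod_w_ne_rep_x hGQ ρ hf _ hs]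

end Rep

end Frame

end SlimPLS

/-- A faithful representation group of the `(2,4)`-GQ has order `2^6`. -/
theorem gq24_faithful_rep_card {P : Type*} (S : SlimPLS P)
    (hGQ : S.IsGQ 4) {R : Type*} [Group R] (ρ : S.Rep R)
    (hf : Function.Injective ρ.r) :
    Nat.card R = 2 ^ 6 := by
  let _ : CommGroup R := { ‹Group R› with mul_comm := ρ.mul_comm hGQ }
  obtain ⟨F⟩ := SlimPLS.Frame.nonempty hGQ
  rw [nat_card_eq_two_pow_of_prodIndependent ρ.mul_self_eq_one (F.closure_range_gens hGQ ρ)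
    (F.prodIndependent_gens hGQ ρ hf)]
  simp
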